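/- Let φ, z, φx, φy, θx, θy be real numbers satisfying cos(φ/2)·e^{iz/2} = cos(φx/2)·cos(φy/2) + e^{i(θx−θy)}·sin(φx/2)·sin(φy/2) (as complex numbers), with cos(φ/2) ≠ 0, sin φx ≠ 0 and sin φy ≠ 0. Then cos(z/2) = (1 + cos φx + cos φy + cos φ) / (4·cos(φ/2)·cos(φx/2)·cos(φy/2)). (By the spherical Heron formula, the right-hand side equals cos(𝒜/2) where 𝒜 is the area of the spherical triangle with vertices the Hopf projections of x, y and the north pole; hence |z| ≡ 𝒜 mod 4π.) -/
import Mathlib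


/-- The spherical Heron-type formula for the vertical coordinate of `x⁻¹y`
in `SU(2)`: under the cylindrical-coordinate equation
`cos(φ/2)·e^{iz/2} = cos(φx/2)cos(φy/2) + e^{i(θx−θy)}·sin(φx/2)sin(φy/2)` (in `ℂ`),
with `cos(φ/2) ≠ 0`, `sin φx ≠ 0` and `sin φy ≠ 0`, one has
`cos(z/2) = (1 + cos φx + cos φy + cos φ) / (4 cos(φ/2) cos(φx/2) cos(φy/2))`. -/
theorem su2_vertical_coordinate_heron (φ z φx φy θx θy : ℝ)
    (h : (Real.cos (φ / 2) : ℂ) * Complex.exp (Complex.I * ((z / 2 : ℝ) : ℂ)) =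
      (Real.cos (φx / 2) : ℂ) * (Real.cos (φy / 2) : ℂ) +
        Complex.exp (Complex.I * ((θx - θy : ℝ) : ℂ)) * (Real.sin (φx / 2) : ℂ) *
          (Real.sin (φy / 2) : ℂ))
    (hφ : Real.cos (φ / 2) ≠ 0) (hφx : Real.sin φx ≠ 0) (hφy : Real.sin φy ≠ 0) :
    Real.cos (z / 2) =
      (1 + Real.cos φx + Real.cos φy + Real.cos φ) /
        (4 * Real.cos (φ / 2) * Real.cos (φx / 2) * Real.cos (φy / 2)) := by
  have hcx : Real.cos (φx / 2) ≠ 0 := by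
    intro h0
    apply hφx
    rw [show φx = 2 * (φx / 2) by ring, Real.sin_two_mul, h0]; ring
  have hcy : Real.cos (φy / 2) ≠ 0 := by
    intro h0
    apply hφy
    rw [show φy = 2 * (φy / 2) by ring, Real.sin_two_mul, h0]; ring
  rw [Complex.ext_iff] at h
  simp only [Complex.add_re, Complex.add_im, Complex.mul_re, Complex.mul_im,
    Complex.ofReal_re, Complex.ofReal_im, Complex.exp_re, Complex.exp_im,
    Complex.I_re, Complex.I_im, Real.exp_zero, zero_mul, mul_zero, one_mul, mul_one,
    zero_add, add_zero, sub_zero, zero_sub, neg_zero] at h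
  obtain ⟨hre, him⟩ := h
  have hφe : Real.cos φ = 2 * Real.cos (φ / 2) ^ 2 - 1 := by
    have := Real.cos_two_mul (φ / 2); rw [show 2 * (φ / 2) = φ by ring] at this
    linarith
  have hφxe : Real.cos φx = 2 * Real.cos (φx / 2) ^ 2 - 1 := by
    have := Real.cos_two_mul (φx / 2); rw [show 2 * (φx / 2) = φx by ring] at this
    linarith
  have hφye : Real.cos φy = 2 * Real.cos (φy / 2) ^ 2 - 1 := by
    have := Real.cos_two_mul (φy / 2); rw [show 2 * (φy / 2) = φy by ring] at this
    linarith
  have pz := Real.sin_sq_add_cos_sq (z / 2)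
  have pθ := Real.sin_sq_add_cos_sq (θx - θy)
  have px := Real.sin_sq_add_cos_sq (φx / 2)
  have py := Real.sin_sq_add_cos_sq (φy / 2)
  rw [eq_div_iff (by
    apply mul_ne_zero (mul_ne_zero (mul_ne_zero four_ne_zero hφ) hcx) hcy)]
  linear_combination
    (2 * Real.cos (φx / 2) * Real.cos (φy / 2) - 2 * Real.cos (φ / 2) * Real.cos (z / 2)
        - 2 * Real.cos (θx - θy) * Real.sin (φx / 2) * Real.sin (φy / 2)) * hre
    + (-2 * Real.cos (φ / 2) * Real.sin (z / 2)
        - 2 * Real.sin (θx - θy) * Real.sin (φx / 2) * Real.sin (φy / 2)) * him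
    + 2 * Real.cos (φ / 2) ^ 2 * pz
    - 2 * Real.sin (φx / 2) ^ 2 * Real.sin (φy / 2) ^ 2 * pθ
    - 2 * Real.sin (φy / 2) ^ 2 * px
    + (2 * Real.cos (φx / 2) ^ 2 - 2) * py
    - hφe - hφxe - hφye
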